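/- Let p be a fixed odd prime and let q ∈ ℚ_p satisfy ‖q − 1‖_p < 1. For every continuous function f : ℤ_p → ℚ_p, with f_1 denoting the translated function f_1(x) = f(x + 1), the fermionic p-adic q-integral satisfies q · I_{−q}(f_1) + I_{−q}(f) = [2]_q · f(0), where [2]_q = 1 + q. Concretely: q · lim_{N→∞} (1/[p^N]_{−q}) Σ_{x=0}^{p^N − 1} f(x+1)(−q)^x + lim_{N→∞} (1/[p^N]_{−q}) Σ_{x=0}^{p^N − 1} f(x)(−q)^x = (1 + q) f(0), both limits existing. -/

import Mathlib

/-!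
Write `A_N(g) = (1 + q) / (1 + q ^ p ^ N) * ∑_{x < p ^ N} g(x) (-q) ^ x`. Since `p` is odd and
`q ≡ 1`, every `1 + q ^ n` is a `p`-adic unit, so all normalising factors have norm one.
Splitting the level-`N + 1` sum along residues modulo `p ^ N`, `A_{N+1}(g) - A_N(g)` becomes a
sum of unit multiples of `g(i + p ^ N j) - g(i)`; by uniform continuity and the ultrametric
inequality these differences tend to zero, so `A_N(g)` converges. The relation itself comes
from telescoping: `q A_N(g(· + 1)) + A_N(g)` equals
`(1 + q) / (1 + q ^ p ^ N) * (g 0 + q ^ p ^ N g(p ^ N))`, which tends to `(1 + q) g(0)` because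
`p ^ N → 0` in `ℤ_p`.
-/

open Filter Finset Topology

theorem Finset.sum_range_mul_eq_sum_sum {M : Type*} [AddCommMonoid M] (F : ℕ → M) (m n : ℕ) :
    ∑ x ∈ range (m * n), F x = ∑ i ∈ range m, ∑ j ∈ range n, F (i + m * j) := by
  induction n with
  | zero => simp
  | succ n ih =>
    rw [mul_add_one, sum_range_add, ih, ← sum_add_distrib]
    refine sum_congr rfl fun i _ => ?_
    rw [sum_range_succ, add_comm (m * n) i]

section FermionicSums

variable {R : Type*} [CommRing R] (q : R) (h : ℕ → R)

theorem one_add_pow_mul_sum_neg_pow {m n : ℕ} (hm : Odd m) (hn : Odd n) :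
    (1 + q ^ m) * ∑ j ∈ range n, (-q) ^ (m * j) = 1 + q ^ (m * n) := by
  simp only [pow_mul, hm.neg_pow]
  rw [← sub_neg_eq_add 1 (q ^ m), mul_neg_geom_sum, hn.neg_pow, sub_neg_eq_add]

theorem fermionic_sum_refine {m n : ℕ} (hm : Odd m) (hn : Odd n) :
    (1 + q ^ m) * ∑ x ∈ range (m * n), h x * (-q) ^ x
        - (1 + q ^ (m * n)) * ∑ x ∈ range m, h x * (-q) ^ x
      = (1 + q ^ m) * ∑ i ∈ range m, ∑ j ∈ range n,
          (h (i + m * j) - h i) * (-q) ^ (i + m * j) := by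
  have hsplit : ∑ i ∈ range m, ∑ j ∈ range n, h i * (-q) ^ (i + m * j)
      = ∑ i ∈ range m, h i * (-q) ^ i * ∑ j ∈ range n, (-q) ^ (m * j) := by
    simp only [mul_sum, pow_add, mul_assoc]
  have hrefined : (1 + q ^ m) * ∑ i ∈ range m, ∑ j ∈ range n, h i * (-q) ^ (i + m * j)
      = (1 + q ^ (m * n)) * ∑ x ∈ range m, h x * (-q) ^ x := by
    rw [hsplit, ← one_add_pow_mul_sum_neg_pow q hm hn, mul_sum, mul_sum]
    exact sum_congr rfl fun i _ => by ring
  rw [← hrefined, sum_range_mul_eq_sum_sum, ← mul_sub, ← sum_sub_distrib]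
  simp only [← sum_sub_distrib, sub_mul]

theorem fermionic_sum_telescope (n : ℕ) :
    q * ∑ x ∈ range n, h (x + 1) * (-q) ^ x + ∑ x ∈ range n, h x * (-q) ^ x
      = h 0 - h n * (-q) ^ n := by
  calc q * ∑ x ∈ range n, h (x + 1) * (-q) ^ x + ∑ x ∈ range n, h x * (-q) ^ x
      = ∑ x ∈ range n, (h x * (-q) ^ x - h (x + 1) * (-q) ^ (x + 1)) := by
        rw [mul_sum, ← sum_add_distrib]
        exact sum_congr rfl fun x _ => by ring
    _ = h 0 - h n * (-q) ^ n := by rw [sum_range_sub']; simp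

end FermionicSums

theorem IsUltrametricDist.norm_pow_sub_one_le {R : Type*} [NormedRing R] [NormOneClass R]
    [IsUltrametricDist R] {x : R} (hx : ‖x‖ ≤ 1) (n : ℕ) :
    ‖x ^ n - 1‖ ≤ ‖x - 1‖ := by
  rw [← geom_sum_mul]
  refine (norm_mul_le _ _).trans (mul_le_of_le_one_left (norm_nonneg _) ?_)
  exact norm_sum_le_of_forall_le_of_nonneg zero_le_one fun i _ =>
    (_root_.norm_pow_le x i).trans (pow_le_one₀ (norm_nonneg x) hx)

namespace Padic

variable {p : ℕ} [Fact p.Prime] {q : ℚ_[p]}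

theorem norm_eq_one_of_norm_sub_one_lt_one (hq : ‖q - 1‖ < 1) : ‖q‖ = 1 := by
  simpa using norm_eq_of_norm_sub_lt_right (z2 := 1) (by simpa using hq)

theorem norm_one_add_pow_eq_one (hp : Odd p) (hq : ‖q - 1‖ < 1) (n : ℕ) :
    ‖1 + q ^ n‖ = 1 := by
  have h2 : ‖(2 : ℚ_[p])‖ = 1 := by
    exact_mod_cast norm_natCast_eq_one_iff.2 (Nat.coprime_two_right.2 hp)
  have hclose : ‖1 + q ^ n - 2‖ < ‖(2 : ℚ_[p])‖ := by
    rw [h2, show 1 + q ^ n - 2 = q ^ n - 1 by ring]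
    exact (IsUltrametricDist.norm_pow_sub_one_le
      (norm_eq_one_of_norm_sub_one_lt_one hq).le n).trans_lt hq
  exact (norm_eq_of_norm_sub_lt_right hclose).trans h2

theorem one_add_pow_ne_zero (hp : Odd p) (hq : ‖q - 1‖ < 1) (n : ℕ) : 1 + q ^ n ≠ 0 :=
  norm_ne_zero_iff.1 (by simp [norm_one_add_pow_eq_one hp hq n])

theorem norm_one_add_div_one_add_pow (hp : Odd p) (hq : ‖q - 1‖ < 1) (n : ℕ) :
    ‖(1 + q) / (1 + q ^ n)‖ = 1 := by
  rw [norm_div, ← pow_one q, norm_one_add_pow_eq_one hp hq, pow_one,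
    norm_one_add_pow_eq_one hp hq, div_one]

theorem norm_neg_pow_eq_one (hq : ‖q - 1‖ < 1) (n : ℕ) : ‖(-q) ^ n‖ = 1 := by
  rw [norm_pow, norm_neg, norm_eq_one_of_norm_sub_one_lt_one hq, one_pow]

end Padic

theorem PadicInt.tendsto_pow_p_nhds_zero {p : ℕ} [Fact p.Prime] :
    Tendsto (fun N : ℕ => (p : ℤ_[p]) ^ N) atTop (𝓝 0) :=
  tendsto_pow_atTop_nhds_zero_of_norm_lt_one <| by
    simpa [PadicInt.norm_p, Padic.norm_p] using Padic.norm_p_lt_one (p := p)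

section FermionicIntegral

open Padic

variable {p : ℕ} [Fact p.Prime] (q : ℚ_[p])

noncomputable def fermionicRiemannSum (h : ℕ → ℚ_[p]) (N : ℕ) : ℚ_[p] :=
  (1 + q) / (1 + q ^ p ^ N) * ∑ x ∈ range (p ^ N), h x * (-q) ^ x

variable {q}

theorem norm_fermionicRiemannSum_succ_sub_le (hp : Odd p) (hq : ‖q - 1‖ < 1)
    {h : ℕ → ℚ_[p]} (N : ℕ) {ε : ℝ} (hε : 0 ≤ ε) (hh : ∀ i j, ‖h (i + p ^ N * j) - h i‖ ≤ ε) :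
    ‖fermionicRiemannSum q h (N + 1) - fermionicRiemannSum q h N‖ ≤ ε := by
  have hdiff : fermionicRiemannSum q h (N + 1) - fermionicRiemannSum q h N
      = (1 + q) / (1 + q ^ p ^ (N + 1)) * ∑ i ∈ range (p ^ N), ∑ j ∈ range p,
          (h (i + p ^ N * j) - h i) * (-q) ^ (i + p ^ N * j) := by
    have hrefine := fermionic_sum_refine q h (hp.pow (n := N)) hp
    rw [← pow_succ] at hrefine
    have hm := one_add_pow_ne_zero hp hq (p ^ N)
    have hmn := one_add_pow_ne_zero hp hq (p ^ (N + 1))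
    unfold fermionicRiemannSum
    field_simp
    linear_combination (1 + q) * hrefine
  rw [hdiff, norm_mul, norm_one_add_div_one_add_pow hp hq, one_mul]
  refine IsUltrametricDist.norm_sum_le_of_forall_le_of_nonneg hε fun i _ => ?_
  refine IsUltrametricDist.norm_sum_le_of_forall_le_of_nonneg hε fun j _ => ?_
  rw [norm_mul, norm_neg_pow_eq_one hq, mul_one]
  exact hh i j

theorem exists_tendsto_fermionicRiemannSum (hp : Odd p) (hq : ‖q - 1‖ < 1)
    (g : C(ℤ_[p], ℚ_[p])) :
    ∃ I, Tendsto (fermionicRiemannSum q fun x : ℕ => g x) atTop (𝓝 I) := by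
  refine cauchySeq_tendsto_of_complete
    (NonarchimedeanAddGroup.cauchySeq_of_tendsto_sub_nhds_zero ?_)
  rw [NormedAddGroup.tendsto_nhds_zero]
  intro ε hε
  obtain ⟨δ, hδ, hg⟩ := Metric.uniformContinuous_iff.1
    (CompactSpace.uniformContinuous_of_continuous g.continuous) (ε / 2) (half_pos hε)
  filter_upwards
    [NormedAddGroup.tendsto_nhds_zero.1 (PadicInt.tendsto_pow_p_nhds_zero (p := p)) δ hδ]
    with N hN
  refine (norm_fermionicRiemannSum_succ_sub_le hp hq N (half_pos hε).le fun i j => ?_).trans_lt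
    (half_lt_self hε)
  refine (hg ?_).le
  rw [dist_eq_norm, Nat.cast_add, add_sub_cancel_left, Nat.cast_mul, Nat.cast_pow]
  exact (norm_mul_le _ _).trans_lt
    ((mul_le_of_le_one_right (norm_nonneg _) (PadicInt.norm_le_one _)).trans_lt hN)

theorem tendsto_fermionic_boundary_term (hp : Odd p) (hq : ‖q - 1‖ < 1)
    (g : C(ℤ_[p], ℚ_[p])) :
    Tendsto
      (fun N : ℕ => (1 + q) / (1 + q ^ p ^ N) * (g 0 - g ((p : ℤ_[p]) ^ N) * (-q) ^ p ^ N))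
      atTop (𝓝 ((1 + q) * g 0)) := by
  have hdist : ∀ N : ℕ,
      ‖(1 + q) / (1 + q ^ p ^ N) * (g 0 - g ((p : ℤ_[p]) ^ N) * (-q) ^ p ^ N) - (1 + q) * g 0‖
        = ‖g ((p : ℤ_[p]) ^ N) - g 0‖ := fun N => by
    have hodd : (-q) ^ p ^ N = -q ^ p ^ N := (hp.pow (n := N)).neg_pow q
    have hsplit : (1 + q) / (1 + q ^ p ^ N) * (g 0 - g ((p : ℤ_[p]) ^ N) * (-q) ^ p ^ N)
          - (1 + q) * g 0
        = (1 + q) / (1 + q ^ p ^ N) * (-q) ^ p ^ N * (g 0 - g ((p : ℤ_[p]) ^ N)) := by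
      rw [hodd]
      field_simp [one_add_pow_ne_zero hp hq]
      ring
    rw [hsplit, norm_mul, norm_mul, norm_one_add_div_one_add_pow hp hq, norm_neg_pow_eq_one hq,
      one_mul, one_mul, norm_sub_rev]
  rw [tendsto_iff_norm_sub_tendsto_zero]
  simp only [hdist]
  exact tendsto_iff_norm_sub_tendsto_zero.1
    ((g.continuous.tendsto 0).comp PadicInt.tendsto_pow_p_nhds_zero)

end FermionicIntegral

theorem stmt_4 (p : ℕ) [Fact p.Prime] (hp : Odd p)
    (q : ℚ_[p]) (hq : ‖q - 1‖ < 1)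
    (f : C(ℤ_[p], ℚ_[p])) :
    ∃ I I₁ : ℚ_[p],
      Tendsto
        (fun N : ℕ =>
          (1 / ((1 + q ^ p ^ N) / (1 + q))) *
            ∑ x ∈ Finset.range (p ^ N), f ((x : ℤ_[p]) + 1) * (-q) ^ x)
        atTop (nhds I₁) ∧
      Tendsto
        (fun N : ℕ =>
          (1 / ((1 + q ^ p ^ N) / (1 + q))) *
            ∑ x ∈ Finset.range (p ^ N), f (x : ℤ_[p]) * (-q) ^ x)
        atTop (nhds I) ∧
      q * I₁ + I = (1 + q) * f 0 := by
  obtain ⟨I, hI⟩ := exists_tendsto_fermionicRiemannSum hp hq f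
  obtain ⟨I₁, hI₁⟩ := exists_tendsto_fermionicRiemannSum hp hq (f.comp (.addRight 1))
  simp only [one_div_div]
  refine ⟨I, I₁, hI₁, hI, tendsto_nhds_unique ((hI₁.const_mul q).add hI) ?_⟩
  refine (tendsto_fermionic_boundary_term hp hq f).congr fun N => ?_
  have htel := fermionic_sum_telescope q (fun x : ℕ => f x) (p ^ N)
  push_cast at htel
  show _ = q * fermionicRiemannSum q (fun x : ℕ => f ((x : ℤ_[p]) + 1)) N
    + fermionicRiemannSum q (fun x : ℕ => f x) N
  rw [← htel, fermionicRiemannSum, fermionicRiemannSum]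
  ring
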